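/- Let n ≥ 1 be an integer, φ = π/(2n), P = P(φ) = [[1, -tan φ],[0,0]], R = R(φ) the rotation by 2φ. For any finite sequence B_1, …, B_m with each B_i ∈ {P, R}, the operator norm (with respect to the Euclidean norm on ℝ²) satisfies ‖B_m B_{m-1} ⋯ B_1‖ ≤ ‖P(φ)‖. -/

import Mathlib

open Real Matrix

noncomputable def P (φ : ℝ) : Matrix (Fin 2) (Fin 2) ℝ := !![1, -Real.tan φ; 0, 0]

noncomputable def R (φ : ℝ) : Matrix (Fin 2) (Fin 2) ℝ :=
  !![Real.cos (2*φ), -Real.sin (2*φ); Real.sin (2*φ), Real.cos (2*φ)]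

noncomputable def opNorm (A : Matrix (Fin 2) (Fin 2) ℝ) : ℝ :=
  ‖Matrix.toEuclideanCLM (𝕜 := ℝ) A‖

/-!
For `φ = π / (2n)` one computes `P R^k P = s_k • P` with `s_k = cos ((2k+1)φ) / cos φ`, and
`|s_k| ≤ 1` because an odd multiple of `π / (2n)` has distance at least `φ` from `πℤ`. Hence every
word in `P` and `R` is either a power of `R` or of the form `R^a P Y` with `‖Y‖ ≤ 1`, and the bound
follows since `R` is orthogonal and `‖P‖ ≥ 1`.
-/

open scoped Matrix.Norms.L2Operator

section SandwichBound

variable {𝕜 E : Type*} [NormedField 𝕜] [SeminormedRing E] [NormedAlgebra 𝕜 E] {A B : E}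

theorem List.prod_eq_pow_or_eq_pow_mul_mul_of_sandwich (hB : ∀ k : ℕ, ‖B ^ k‖ ≤ 1)
    (hABA : ∀ k : ℕ, ∃ c : 𝕜, ‖c‖ ≤ 1 ∧ A * B ^ k * A = c • A) {l : List E}
    (hl : ∀ x ∈ l, x = A ∨ x = B) :
    (∃ k : ℕ, l.prod = B ^ k) ∨ ∃ (a : ℕ) (y : E), ‖y‖ ≤ 1 ∧ l.prod = B ^ a * A * y := by
  induction l with
  | nil => exact .inl ⟨0, by simp⟩
  | cons x l ih =>
    rw [List.prod_cons]
    rcases hl x List.mem_cons_self, ih fun y hy ↦ hl y (List.mem_cons_of_mem _ hy)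
      with ⟨rfl | rfl, ⟨k, hk⟩ | ⟨a, y, hy, hprod⟩⟩
    · exact .inr ⟨0, B ^ k, hB k, by rw [hk, pow_zero, one_mul]⟩
    · obtain ⟨c, hc, hABA⟩ := hABA a
      refine .inr ⟨0, c • y, (norm_smul_le c y).trans (mul_le_one₀ hc (norm_nonneg y) hy), ?_⟩
      rw [hprod, ← mul_assoc, ← mul_assoc, hABA, pow_zero, one_mul, smul_mul_assoc,
        mul_smul_comm]
    · exact .inl ⟨k + 1, by rw [hk, pow_succ']⟩
    · exact .inr ⟨a + 1, y, hy, by simp only [hprod, pow_succ', mul_assoc]⟩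

theorem norm_list_prod_le_of_sandwich (hB : ∀ k : ℕ, ‖B ^ k‖ ≤ 1)
    (hABA : ∀ k : ℕ, ∃ c : 𝕜, ‖c‖ ≤ 1 ∧ A * B ^ k * A = c • A) (hA : 1 ≤ ‖A‖) {l : List E}
    (hl : ∀ x ∈ l, x = A ∨ x = B) : ‖l.prod‖ ≤ ‖A‖ := by
  rcases List.prod_eq_pow_or_eq_pow_mul_mul_of_sandwich hB hABA hl with ⟨k, hk⟩ | ⟨a, y, hy, hprod⟩
  · exact hk ▸ (hB k).trans hA
  · calc ‖l.prod‖ ≤ ‖B ^ a‖ * ‖A‖ * ‖y‖ := hprod ▸ norm_mul₃_le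
      _ ≤ 1 * ‖A‖ * 1 := by gcongr; exact hB a
      _ = ‖A‖ := by ring

end SandwichBound

theorem R_mul_R (a b : ℝ) : R a * R b = R (a + b) := by
  ext i j
  fin_cases i <;> fin_cases j <;> simp [R, mul_apply, mul_add, cos_add, sin_add] <;> ring

theorem R_pow (ψ : ℝ) (k : ℕ) : R ψ ^ k = R (k * ψ) := by
  induction k with
  | zero => simp [R, one_fin_two]
  | succ k ih => rw [pow_succ, ih, R_mul_R]; congr 1; push_cast; ring

theorem R_mem_unitary (ψ : ℝ) : R ψ ∈ unitary (Matrix (Fin 2) (Fin 2) ℝ) := by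
  rw [← Matrix.unitaryGroup, Matrix.mem_unitaryGroup_iff, star_eq_conjTranspose,
    conjTranspose_eq_transpose_of_trivial]
  ext i j
  fin_cases i <;> fin_cases j <;> simp [R, mul_apply] <;> linarith [sin_sq_add_cos_sq (2 * ψ)]

theorem norm_R (ψ : ℝ) : ‖R ψ‖ = 1 := CStarRing.norm_of_mem_unitary (R_mem_unitary ψ)

theorem one_le_norm_P (φ : ℝ) : 1 ≤ ‖P φ‖ := by
  simpa [P, col, EuclideanSpace.norm_eq] using
    l2_opNorm_mulVec (P φ) (EuclideanSpace.single 0 1 : EuclideanSpace ℝ (Fin 2))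

theorem P_mul_R_mul_P (φ ψ : ℝ) :
    P φ * R ψ * P φ = (cos (2 * ψ) - tan φ * sin (2 * ψ)) • P φ := by
  rw [P, R, mul_fin_two, mul_fin_two, smul_of]
  simp [← sub_eq_add_neg]

theorem abs_cos_le_cos_of_le_of_le_pi_sub {φ θ : ℝ} (hφ : 0 ≤ φ) (hφθ : φ ≤ θ)
    (hθπ : θ ≤ π - φ) : |cos θ| ≤ cos φ := by
  rw [abs_le, neg_le, ← cos_pi_sub]
  exact ⟨cos_le_cos_of_nonneg_of_le_pi hφ (by linarith) (by linarith),
    cos_le_cos_of_nonneg_of_le_pi hφ (by linarith) hφθ⟩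

theorem abs_cos_odd_mul_pi_div_le {n m : ℕ} (hn : n ≠ 0) (hm : Odd m) :
    |cos (m * (π / (2 * n)))| ≤ cos (π / (2 * n)) := by
  set φ := π / (2 * n)
  have hφ : 0 ≤ φ := by positivity
  have hnφ : 2 * n * φ = π := mul_div_cancel₀ π (by positivity)
  obtain ⟨r, q, hr1, hr2, rfl⟩ : ∃ r q : ℕ, 1 ≤ r ∧ r + 1 ≤ 2 * n ∧ m = r + 2 * n * q := by
    refine ⟨m % (2 * n), m / (2 * n), ?_, ?_, (Nat.mod_add_div m (2 * n)).symm⟩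
    · have := Nat.mod_mod_of_dvd m (dvd_mul_right 2 n)
      have := Nat.odd_iff.mp hm
      omega
    · have := Nat.mod_lt m (by omega : 0 < 2 * n)
      omega
  have hr1' : (1 : ℝ) ≤ r := by exact_mod_cast hr1
  have hr2' : (r : ℝ) + 1 ≤ 2 * n := by exact_mod_cast hr2
  have hangle : (↑(r + 2 * n * q) : ℝ) * φ = r * φ + q * π := by
    push_cast; rw [← hnφ]; ring
  rw [hangle, cos_add_nat_mul_pi, abs_mul, abs_pow, abs_neg, abs_one, one_pow, one_mul]
  apply abs_cos_le_cos_of_le_of_le_pi_sub hφ (by nlinarith)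
  nlinarith

theorem cos_sub_tan_mul_sin {φ : ℝ} (hφ : cos φ ≠ 0) (x : ℝ) :
    cos x - tan φ * sin x = cos (x + φ) / cos φ := by
  rw [tan_eq_sin_div_cos, cos_add]
  field_simp

theorem abs_cos_sub_tan_mul_sin_le_one {n : ℕ} (hn : n ≠ 0) (k : ℕ) :
    |cos (2 * (k * (π / (2 * n)))) - tan (π / (2 * n)) * sin (2 * (k * (π / (2 * n))))| ≤ 1 := by
  set φ := π / (2 * n)
  by_cases hφ : cos φ = 0
  · rw [tan_eq_sin_div_cos, hφ, div_zero, zero_mul, sub_zero]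
    exact abs_cos_le_one _
  rw [cos_sub_tan_mul_sin hφ, abs_div]
  refine div_le_one_of_le₀ ?_ (abs_nonneg _)
  calc |cos (2 * (k * φ) + φ)| = |cos (↑(2 * k + 1) * φ)| := by push_cast; ring_nf
    _ ≤ |cos φ| := (abs_cos_odd_mul_pi_div_le hn (odd_two_mul_add_one k)).trans (le_abs_self _)

theorem stmt6 (n : ℕ) (hn : 1 ≤ n) (φ : ℝ) (hφ : φ = Real.pi / (2 * (n : ℝ)))
    (l : List (Matrix (Fin 2) (Fin 2) ℝ)) (hl : ∀ B ∈ l, B = P φ ∨ B = R φ) :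
    opNorm l.prod ≤ opNorm (P φ) := by
  subst hφ
  -- `opNorm` is definitionally the `Matrix.Norms.L2Operator` norm
  show ‖l.prod‖ ≤ ‖P _‖
  refine norm_list_prod_le_of_sandwich (𝕜 := ℝ) (fun k ↦ ?_) (fun k ↦ ?_) (one_le_norm_P _) hl
  · rw [R_pow, norm_R]
  · exact ⟨_, abs_cos_sub_tan_mul_sin_le_one (n := n) (by omega) k, by rw [R_pow, P_mul_R_mul_P]⟩
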